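/- Let X and Y be nonempty finite sets and let W be a classical channel from X to Y, i.e., W(y|x) ≥ 0 and ∑_{y∈Y} W(y|x) = 1 for every x ∈ X. Then the maximum over all probability distributions P on X of (−log max_{y∈Y} ∑_{x : W(y|x)>0} P(x)) equals the minimum over all probability distributions Q on Y of max_{x∈X} (−log ∑_{y : W(y|x)>0} Q(y)), the equality holding in the extended nonnegative reals [0,∞], with the maximum over P and the minimum over Q attained. -/

import Mathlib

open scoped ENNReal

/-- `-log r` as an extended nonnegative real, `+∞` when `r ≤ 0`. -/
noncomputable def negLog (r : ℝ) : ℝ≥0∞ :=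
  if r ≤ 0 then ⊤ else ENNReal.ofReal (-Real.log r)

/-!
With `A` the 0-1 matrix of the support of `W`, both sides are `-log` of the value of the
zero-sum matrix game with payoff `P ⬝ᵥ (A *ᵥ Q)`: the `P`-player minimises `max_y (P ᵥ* A) y`,
the `Q`-player maximises `min_x (A *ᵥ Q) x`. By von Neumann's minimax theorem the game has a
saddle point, which is a pair of optimal strategies with equal values; the antitone `negLog`
turns the min over `P` into a max and the inner min over `x` into a sup.
-/

open Finset Matrix

theorem negLog_antitone : Antitone negLog := by
  intro a b hab
  unfold negLog
  by_cases ha : a ≤ 0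
  · simp [ha]
  · have hb : ¬ b ≤ 0 := fun hb => ha (hab.trans hb)
    simp only [ha, hb, if_false]
    exact ENNReal.ofReal_le_ofReal (neg_le_neg (Real.log_le_log (not_le.1 ha) hab))

theorem iSup_negLog {ι : Type*} [Fintype ι] [Nonempty ι] (f : ι → ℝ) :
    ⨆ i, negLog (f i) = negLog (univ.inf' univ_nonempty f) := by
  refine le_antisymm (iSup_le fun i => negLog_antitone (inf'_le f (mem_univ i))) ?_
  obtain ⟨i, -, hi⟩ := exists_mem_eq_inf' univ_nonempty f
  exact hi ▸ le_iSup (fun i => negLog (f i)) i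

section StdSimplex

variable {ι : Type*} [Fintype ι] [Nonempty ι] {w : ι → ℝ}

theorem inf'_le_dotProduct_of_mem_stdSimplex (hw : w ∈ stdSimplex ℝ ι) (v : ι → ℝ) :
    univ.inf' univ_nonempty v ≤ w ⬝ᵥ v :=
  calc univ.inf' univ_nonempty v = ∑ i, w i * univ.inf' univ_nonempty v := by
        rw [← sum_mul, hw.2, one_mul]
    _ ≤ ∑ i, w i * v i :=
        sum_le_sum fun i _ => mul_le_mul_of_nonneg_left (inf'_le v (mem_univ i)) (hw.1 i)

theorem dotProduct_le_sup'_of_mem_stdSimplex (hw : w ∈ stdSimplex ℝ ι) (v : ι → ℝ) :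
    w ⬝ᵥ v ≤ univ.sup' univ_nonempty v :=
  calc ∑ i, w i * v i ≤ ∑ i, w i * univ.sup' univ_nonempty v :=
        sum_le_sum fun i _ => mul_le_mul_of_nonneg_left (le_sup' v (mem_univ i)) (hw.1 i)
    _ = univ.sup' univ_nonempty v := by rw [← sum_mul, hw.2, one_mul]

end StdSimplex

section MatrixGame

variable {X Y : Type*} [Fintype X] [Nonempty X] [Fintype Y] [Nonempty Y] (A : Matrix X Y ℝ)

theorem inf'_mulVec_le_sup'_vecMul {P : X → ℝ} {Q : Y → ℝ}
    (hP : P ∈ stdSimplex ℝ X) (hQ : Q ∈ stdSimplex ℝ Y) :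
    univ.inf' univ_nonempty (A *ᵥ Q) ≤ univ.sup' univ_nonempty (P ᵥ* A) :=
  calc univ.inf' univ_nonempty (A *ᵥ Q) ≤ P ⬝ᵥ (A *ᵥ Q) :=
        inf'_le_dotProduct_of_mem_stdSimplex hP _
    _ = Q ⬝ᵥ (P ᵥ* A) := by rw [dotProduct_mulVec, dotProduct_comm]
    _ ≤ univ.sup' univ_nonempty (P ᵥ* A) := dotProduct_le_sup'_of_mem_stdSimplex hQ _

theorem exists_isSaddlePointOn_dotProduct_mulVec :
    ∃ P ∈ stdSimplex ℝ X, ∃ Q ∈ stdSimplex ℝ Y,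
      IsSaddlePointOn (stdSimplex ℝ X) (stdSimplex ℝ Y) (fun P Q => P ⬝ᵥ (A *ᵥ Q)) P Q := by
  refine Sion.exists_isSaddlePointOn (isPathConnected_stdSimplex X).nonempty
    (convex_stdSimplex ℝ X) (isCompact_stdSimplex ℝ X) (fun Q _ => ?_) (fun Q _ => ?_)
    (convex_stdSimplex ℝ Y) (isPathConnected_stdSimplex Y).nonempty (isCompact_stdSimplex ℝ Y)
    (fun P _ => ?_) (fun P _ => ?_)
  · exact (continuous_id.dotProduct continuous_const).lowerSemicontinuous.lowerSemicontinuousOn _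
  · exact (((dotProductBilin ℝ ℝ).flip (A *ᵥ Q)).convexOn (convex_stdSimplex ℝ X)).quasiconvexOn
  · exact (continuous_const.dotProduct
      (continuous_const.matrix_mulVec continuous_id)).upperSemicontinuous.upperSemicontinuousOn _
  · exact ((dotProductBilin ℝ ℝ P ∘ₗ A.mulVecLin).concaveOn (convex_stdSimplex ℝ Y)).quasiconcaveOn

theorem exists_optimal_strategies :
    ∃ P ∈ stdSimplex ℝ X, ∃ Q ∈ stdSimplex ℝ Y,
      (∀ P' ∈ stdSimplex ℝ X,
        univ.sup' univ_nonempty (P ᵥ* A) ≤ univ.sup' univ_nonempty (P' ᵥ* A)) ∧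
      (∀ Q' ∈ stdSimplex ℝ Y,
        univ.inf' univ_nonempty (A *ᵥ Q') ≤ univ.inf' univ_nonempty (A *ᵥ Q)) ∧
      univ.sup' univ_nonempty (P ᵥ* A) = univ.inf' univ_nonempty (A *ᵥ Q) := by
  classical
  obtain ⟨P, hP, Q, hQ, hPQ⟩ := exists_isSaddlePointOn_dotProduct_mulVec A
  -- test the saddle point against the pure strategies
  have hle : univ.sup' univ_nonempty (P ᵥ* A) ≤ univ.inf' univ_nonempty (A *ᵥ Q) :=
    sup'_le _ _ fun y _ => le_inf' _ _ fun x _ => by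
      have h : P ⬝ᵥ (A *ᵥ Pi.single y 1) ≤ Pi.single x 1 ⬝ᵥ (A *ᵥ Q) :=
        hPQ _ (single_mem_stdSimplex ℝ x) _ (single_mem_stdSimplex ℝ y)
      rwa [single_dotProduct, one_mul, dotProduct_mulVec, dotProduct_single_one] at h
  have hval := le_antisymm hle (inf'_mulVec_le_sup'_vecMul A hP hQ)
  refine ⟨P, hP, Q, hQ, fun P' hP' => ?_, fun Q' hQ' => ?_, hval⟩
  · exact hval ▸ inf'_mulVec_le_sup'_vecMul A hP' hQ
  · exact hval ▸ inf'_mulVec_le_sup'_vecMul A hP hQ'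

end MatrixGame

noncomputable def supportMatrix {X Y : Type*} (W : X → Y → ℝ) : Matrix X Y ℝ :=
  of fun x y => if 0 < W x y then 1 else 0

theorem vecMul_supportMatrix_apply {X Y : Type*} [Fintype X] (W : X → Y → ℝ) (P : X → ℝ)
    (y : Y) :
    (P ᵥ* supportMatrix W) y = ∑ x, if 0 < W x y then P x else 0 := by
  simp [supportMatrix, vecMul, dotProduct]

theorem supportMatrix_mulVec_apply {X Y : Type*} [Fintype Y] (W : X → Y → ℝ) (Q : Y → ℝ)
    (x : X) :
    (supportMatrix W *ᵥ Q) x = ∑ y, if 0 < W x y then Q y else 0 := by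
  simp [supportMatrix, mulVec, dotProduct]

theorem stmt10_general {X Y : Type*} [Fintype X] [Nonempty X] [Fintype Y] [Nonempty Y]
    (W : X → Y → ℝ) :
    ∃ (P : X → ℝ) (Q : Y → ℝ),
      (∀ x, 0 ≤ P x) ∧ (∑ x, P x = 1) ∧ (∀ y, 0 ≤ Q y) ∧ (∑ y, Q y = 1) ∧
      (∀ P' : X → ℝ, (∀ x, 0 ≤ P' x) → (∑ x, P' x = 1) →
        negLog (Finset.univ.sup' Finset.univ_nonempty
            fun y => ∑ x, if 0 < W x y then P' x else 0) ≤
          negLog (Finset.univ.sup' Finset.univ_nonempty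
            fun y => ∑ x, if 0 < W x y then P x else 0)) ∧
      (∀ Q' : Y → ℝ, (∀ y, 0 ≤ Q' y) → (∑ y, Q' y = 1) →
        (⨆ x, negLog (∑ y, if 0 < W x y then Q y else 0)) ≤
          ⨆ x, negLog (∑ y, if 0 < W x y then Q' y else 0)) ∧
      negLog (Finset.univ.sup' Finset.univ_nonempty
          fun y => ∑ x, if 0 < W x y then P x else 0) =
        ⨆ x, negLog (∑ y, if 0 < W x y then Q y else 0) := by
  obtain ⟨P, hP, Q, hQ, hP_opt, hQ_opt, hval⟩ := exists_optimal_strategies (supportMatrix W)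
  simp only [← vecMul_supportMatrix_apply, ← supportMatrix_mulVec_apply, iSup_negLog]
  refine ⟨P, Q, hP.1, hP.2, hQ.1, hQ.2, fun P' hP'₀ hP'₁ => ?_, fun Q' hQ'₀ hQ'₁ => ?_, ?_⟩
  · exact negLog_antitone (hP_opt P' ⟨hP'₀, hP'₁⟩)
  · exact negLog_antitone (hQ_opt Q' ⟨hQ'₀, hQ'₁⟩)
  · exact congrArg negLog hval

/-- Minimax duality for `R_∞`:
`max_P -log max_y ∑_{x : W(y|x)>0} P(x) = min_Q max_x -log ∑_{y : W(y|x)>0} Q(y)`,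
both extrema attained, the equality holding in `[0,∞]`. -/
theorem stmt10 {X Y : Type*} [Fintype X] [Nonempty X] [Fintype Y] [Nonempty Y]
    (W : X → Y → ℝ) (hW : ∀ x y, 0 ≤ W x y) (hW1 : ∀ x, ∑ y, W x y = 1) :
    ∃ (P : X → ℝ) (Q : Y → ℝ),
      (∀ x, 0 ≤ P x) ∧ (∑ x, P x = 1) ∧ (∀ y, 0 ≤ Q y) ∧ (∑ y, Q y = 1) ∧
      (∀ P' : X → ℝ, (∀ x, 0 ≤ P' x) → (∑ x, P' x = 1) →
        negLog (Finset.univ.sup' Finset.univ_nonempty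
            fun y => ∑ x, if 0 < W x y then P' x else 0) ≤
          negLog (Finset.univ.sup' Finset.univ_nonempty
            fun y => ∑ x, if 0 < W x y then P x else 0)) ∧
      (∀ Q' : Y → ℝ, (∀ y, 0 ≤ Q' y) → (∑ y, Q' y = 1) →
        (⨆ x, negLog (∑ y, if 0 < W x y then Q y else 0)) ≤
          ⨆ x, negLog (∑ y, if 0 < W x y then Q' y else 0)) ∧
      negLog (Finset.univ.sup' Finset.univ_nonempty
          fun y => ∑ x, if 0 < W x y then P x else 0) =
        ⨆ x, negLog (∑ y, if 0 < W x y then Q y else 0) :=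
  stmt10_general W
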